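/- Let κ₁ ∈ (0,1), A = √(1+κ₁), B = √(1-κ₁), and let e₁,...,e₄ ∈ ℝ^{2n+2} be orthonormal vectors satisfying ⟨e₁,𝓘e₃⟩ = ⟨e₁,𝓘e₄⟩ = ⟨e₂,𝓘e₃⟩ = ⟨e₂,𝓘e₄⟩ = 0 and A⟨e₁,𝓘e₂⟩ + B⟨e₃,𝓘e₄⟩ = 0, where 𝓘 is the standard complex structure on ℝ^{2n+2}. Then γ(s) = (1/√2)(cos(As)e₁ + sin(As)e₂ + cos(Bs)e₃ + sin(Bs)e₄) satisfies ⟨γ'(s), 𝓘γ(s)⟩ = 0 for all s. -/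

import Mathlib

/-!
The form `ω x y = ⟪x, 𝓘 y⟫` is an alternating real bilinear form. The curve is
`(1/√2)(α + β)`, where `α` and `β` are uniform circular motions at speeds `A` and `B` in the
planes `⟨e₁, e₂⟩` and `⟨e₃, e₄⟩`, which the hypotheses make `ω`-orthogonal. Hence the cross terms
of `ω(γ', γ)` vanish, and `ω(α', α) = -A ω(e₁, e₂)` because `sin² + cos² = 1`; similarly for `β`.
So `ω(γ', γ) = -(A ω(e₁, e₂) + B ω(e₃, e₄)) / 2 = 0`.
-/

open Real

variable {F : Type*}

noncomputable def planarRotation [AddCommGroup F] [Module ℝ F] (a : ℝ) (u v : F) (t : ℝ) : F :=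
  cos (a * t) • u + sin (a * t) • v

theorem hasDerivAt_planarRotation [NormedAddCommGroup F] [NormedSpace ℝ F] (a : ℝ) (u v : F)
    (t : ℝ) : HasDerivAt (planarRotation a u v) (a • (-sin (a * t) • u + cos (a * t) • v)) t := by
  have hcos := ((hasDerivAt_id t).const_mul a).cos.smul_const u
  have hsin := ((hasDerivAt_id t).const_mul a).sin.smul_const v
  refine (hcos.add hsin).congr_deriv ?_
  simp only [id]
  module

namespace LinearMap.BilinForm

section

variable [AddCommGroup F] [Module ℝ F] {ω : LinearMap.BilinForm ℝ F}

theorem IsAlt.apply_rotation (hω : ω.IsAlt) (θ : ℝ) (u v : F) :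
    ω (-sin θ • u + cos θ • v) (cos θ • u + sin θ • v) = -ω u v := by
  have hvu : ω v u = -ω u v := (hω.neg_eq u v).symm
  simp only [map_add, map_smul, LinearMap.add_apply, LinearMap.smul_apply, smul_eq_mul,
    hω.self_eq_zero, hvu]
  linear_combination (-ω u v) * sin_sq_add_cos_sq θ

theorem apply_add_smul_eq_zero {u v w z : F}
    (huw : ω u w = 0) (huz : ω u z = 0) (hvw : ω v w = 0) (hvz : ω v z = 0) (p q p' q' : ℝ) :
    ω (p • u + q • v) (p' • w + q' • z) = 0 := by
  simp [huw, huz, hvw, hvz]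

end

theorem IsAlt.apply_deriv_planarRotation_add [NormedAddCommGroup F] [NormedSpace ℝ F]
    {ω : LinearMap.BilinForm ℝ F} (hω : ω.IsAlt) {u v w z : F}
    (huw : ω u w = 0) (huz : ω u z = 0) (hvw : ω v w = 0) (hvz : ω v z = 0) (c a b s : ℝ) :
    ω (deriv (fun t => c • (planarRotation a u v t + planarRotation b w z t)) s)
        (c • (planarRotation a u v s + planarRotation b w z s)) =
      -c ^ 2 * (a * ω u v + b * ω w z) := by
  have hderiv : HasDerivAt (fun t => c • (planarRotation a u v t + planarRotation b w z t)) _ s :=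
    ((hasDerivAt_planarRotation a u v s).add (hasDerivAt_planarRotation b w z s)).const_smul c
  rw [hderiv.deriv]
  simp only [planarRotation]
  -- naming the four vectors stops `simp` from expanding them into `u, v, w, z`
  set X := -sin (a * s) • u + cos (a * s) • v
  set Y := -sin (b * s) • w + cos (b * s) • z
  set P := cos (a * s) • u + sin (a * s) • v
  set Q := cos (b * s) • w + sin (b * s) • z
  have hXP : ω X P = -ω u v := hω.apply_rotation _ u v
  have hYQ : ω Y Q = -ω w z := hω.apply_rotation _ w z
  have hXQ : ω X Q = 0 := apply_add_smul_eq_zero huw huz hvw hvz ..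
  have hYP : ω Y P = 0 := by
    rw [← hω.neg_eq, apply_add_smul_eq_zero huw huz hvw hvz, neg_zero]
  simp only [map_add, map_smul, LinearMap.add_apply, LinearMap.smul_apply, smul_eq_mul,
    hXP, hYQ, hXQ, hYP]
  ring

end LinearMap.BilinForm

theorem EuclideanSpace.real_inner_I_smul_self {ι : Type*} [Fintype ι]
    (x : EuclideanSpace ℂ ι) : inner ℝ x (Complex.I • x) = 0 := by
  rw [PiLp.inner_apply]
  exact Finset.sum_eq_zero fun i _ => _root_.real_inner_I_smul_self ℂ (x i)

theorem stmt_8_general (n : ℕ) (A B : ℝ)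
    (e : Fin 4 → EuclideanSpace ℂ (Fin (n + 1)))
    (h13 : (inner ℝ (e 0) (Complex.I • e 2) : ℝ) = 0)
    (h14 : (inner ℝ (e 0) (Complex.I • e 3) : ℝ) = 0)
    (h23 : (inner ℝ (e 1) (Complex.I • e 2) : ℝ) = 0)
    (h24 : (inner ℝ (e 1) (Complex.I • e 3) : ℝ) = 0)
    (hAB : A * (inner ℝ (e 0) (Complex.I • e 1) : ℝ)
      + B * (inner ℝ (e 2) (Complex.I • e 3) : ℝ) = 0)
    (γ : ℝ → EuclideanSpace ℂ (Fin (n + 1)))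
    (hγ : γ = fun s => (1 / Real.sqrt 2) • (Real.cos (A * s) • e 0
      + Real.sin (A * s) • e 1 + Real.cos (B * s) • e 2 + Real.sin (B * s) • e 3)) :
    ∀ s : ℝ, (inner ℝ (deriv γ s) (Complex.I • γ s) : ℝ) = 0 := by
  intro s
  let ω : LinearMap.BilinForm ℝ (EuclideanSpace ℂ (Fin (n + 1))) :=
    (innerₗ _).compl₂ (DistribSMul.toLinearMap ℝ _ Complex.I)
  have hω : ω.IsAlt := EuclideanSpace.real_inner_I_smul_self
  have hγ' : γ = fun t => (1 / √2) • (planarRotation A (e 0) (e 1) t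
      + planarRotation B (e 2) (e 3) t) := by
    simp only [hγ, planarRotation, add_assoc]
  change ω (deriv γ s) (γ s) = 0
  rw [hγ', hω.apply_deriv_planarRotation_add h13 h14 h23 h24]
  exact mul_eq_zero_of_right _ hAB

theorem stmt_8 (n : ℕ) (κ₁ : ℝ) (hκ : κ₁ ∈ Set.Ioo (0 : ℝ) 1)
    (A B : ℝ) (hA : A = Real.sqrt (1 + κ₁)) (hB : B = Real.sqrt (1 - κ₁))
    (e : Fin 4 → EuclideanSpace ℂ (Fin (n + 1))) (he : Orthonormal ℝ e)
    (h13 : (inner ℝ (e 0) (Complex.I • e 2) : ℝ) = 0)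
    (h14 : (inner ℝ (e 0) (Complex.I • e 3) : ℝ) = 0)
    (h23 : (inner ℝ (e 1) (Complex.I • e 2) : ℝ) = 0)
    (h24 : (inner ℝ (e 1) (Complex.I • e 3) : ℝ) = 0)
    (hAB : A * (inner ℝ (e 0) (Complex.I • e 1) : ℝ)
      + B * (inner ℝ (e 2) (Complex.I • e 3) : ℝ) = 0)
    (γ : ℝ → EuclideanSpace ℂ (Fin (n + 1)))
    (hγ : γ = fun s => (1 / Real.sqrt 2) • (Real.cos (A * s) • e 0
      + Real.sin (A * s) • e 1 + Real.cos (B * s) • e 2 + Real.sin (B * s) • e 3)) :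
    ∀ s : ℝ, (inner ℝ (deriv γ s) (Complex.I • γ s) : ℝ) = 0 :=
  stmt_8_general n A B e h13 h14 h23 h24 hAB γ hγ
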